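/- Let V be a finite-dimensional real vector space, H ⊂ V a hyperplane (a subspace of codimension 1), and 1 ≤ k ≤ dim H. Let res_H : Y_k(V) → Y_k(H) denote the restriction map, given by pulling back a symmetric bilinear form on ⋀^k V along the map ⋀^k H → ⋀^k V induced by the inclusion H ↪ V. Then res_H(Z_k(V)) = Z_k(H) and res_H(A_k(V)) = A_k(H). -/

import Mathlib

open ExteriorAlgebra Module

variable (p : ℕ) (V : Type*) [AddCommGroup V] [Module ℝ V] [FiniteDimensional ℝ V]

instance extPower_finite : Module.Finite ℝ ↥(⋀[ℝ]^p V) := by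
  refine Module.Finite.iff_fg.mpr (Submodule.FG.pow ?_ p)
  rw [← Submodule.map_top]
  exact (Module.finite_def.mp inferInstance).map _

/-- The decomposable (wedge) vector `v 1 ∧ ⋯ ∧ v p` in the `p`-th exterior power of `V`. -/
noncomputable def wedge (v : Fin p → V) : ↥(⋀[ℝ]^p V) :=
  ⟨ExteriorAlgebra.ιMulti ℝ p v, ExteriorAlgebra.ιMulti_range ℝ p (Set.mem_range_self v)⟩

/-- The canonical lift of an alternating `p`-form on `V` (with values in `N`) to a linear map
on the `p`-th exterior power of `V`, bundled as a linear map. -/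
noncomputable def liftAltPower {N : Type*} [AddCommGroup N] [Module ℝ N] :
    (AlternatingMap ℝ V N (Fin p)) →ₗ[ℝ] (↥(⋀[ℝ]^p V) →ₗ[ℝ] N) where
  toFun g := (ExteriorAlgebra.liftAlternating (Pi.single p g)) ∘ₗ (⋀[ℝ]^p V).subtype
  map_add' g h := by
    show ExteriorAlgebra.liftAlternating (Pi.single p (g + h)) ∘ₗ (⋀[ℝ]^p V).subtype = _
    rw [Pi.single_add, map_add, LinearMap.add_comp]
  map_smul' c g := by
    show ExteriorAlgebra.liftAlternating (Pi.single p (c • g)) ∘ₗ (⋀[ℝ]^p V).subtype = _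
    rw [Pi.single_smul, map_smul, LinearMap.smul_comp]
    rfl

/-- The image of the decomposable element `f 1 ∧ ⋯ ∧ f p` of `⋀^p (V^*)` under the canonical
identification of `⋀^p (V^*)` with the dual space of `⋀^p V` (it is the linear functional
determined by `v₁ ∧ ⋯ ∧ v_p ↦ det (f i (v j))`). -/
noncomputable def dualWedge (f : Fin p → Module.Dual ℝ V) : Module.Dual ℝ ↥(⋀[ℝ]^p V) :=
  liftAltPower p V (Matrix.detRowAlternating.compLinearMap (LinearMap.pi f))

/-- `Y_p(V)`: the space of symmetric bilinear forms on `⋀^p V`, as a submodule of the space of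
all bilinear forms on `⋀^p V`. -/
noncomputable def Yp : Submodule ℝ (↥(⋀[ℝ]^p V) →ₗ[ℝ] ↥(⋀[ℝ]^p V) →ₗ[ℝ] ℝ) where
  carrier := {B | ∀ x y, B x y = B y x}
  add_mem' := by intro B C hB hC x y; simp [hB x y, hC x y]
  zero_mem' := by intro x y; simp
  smul_mem' := by intro c B hB x y; simp [hB x y]

/-- `Z_p(V)`: the space of symmetric bilinear forms on `⋀^p V` whose associated quadratic form
vanishes on all decomposable vectors. -/
noncomputable def Zp : Submodule ℝ (↥(⋀[ℝ]^p V) →ₗ[ℝ] ↥(⋀[ℝ]^p V) →ₗ[ℝ] ℝ) where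
  carrier := {B | (∀ x y, B x y = B y x) ∧ ∀ v : Fin p → V, B (wedge p V v) (wedge p V v) = 0}
  add_mem' := by
    intro B C hB hC
    exact ⟨fun x y => by simp [hB.1 x y, hC.1 x y], fun v => by simp [hB.2 v, hC.2 v]⟩
  zero_mem' := ⟨fun x y => by simp, fun v => by simp⟩
  smul_mem' := by
    intro c B hB
    exact ⟨fun x y => by simp [hB.1 x y], fun v => by simp [hB.2 v]⟩

/-- `Z_p(V^*)`: the space of symmetric bilinear forms on `⋀^p (V^*)` (realized, via the
canonical finite-dimensional identification, on the dual space of `⋀^p V`) whose associated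
quadratic form vanishes on all decomposable vectors of `⋀^p (V^*)`. -/
noncomputable def ZpDual : Submodule ℝ
    (Module.Dual ℝ ↥(⋀[ℝ]^p V) →ₗ[ℝ] Module.Dual ℝ ↥(⋀[ℝ]^p V) →ₗ[ℝ] ℝ) where
  carrier := {C | (∀ x y, C x y = C y x) ∧
    ∀ f : Fin p → Module.Dual ℝ V, C (dualWedge p V f) (dualWedge p V f) = 0}
  add_mem' := by
    intro B C hB hC
    exact ⟨fun x y => by simp [hB.1 x y, hC.1 x y], fun v => by simp [hB.2 v, hC.2 v]⟩
  zero_mem' := ⟨fun x y => by simp, fun v => by simp⟩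
  smul_mem' := by
    intro c B hB
    exact ⟨fun x y => by simp [hB.1 x y], fun v => by simp [hB.2 v]⟩

/-- The perfect-duality pairing `⟨B, C⟩ = tr (B̂ ∘ Ĉ)` between bilinear forms on `⋀^p V` and
bilinear forms on `⋀^p (V^*)` (the latter realized on the dual of `⋀^p V` via the canonical
finite-dimensional identification, and `Ĉ : (⋀^p V)^* → ⋀^p V` being obtained from `C` using
the canonical identification of a finite-dimensional space with its double dual). -/
noncomputable def pairingY
    (B : ↥(⋀[ℝ]^p V) →ₗ[ℝ] ↥(⋀[ℝ]^p V) →ₗ[ℝ] ℝ)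
    (C : Module.Dual ℝ ↥(⋀[ℝ]^p V) →ₗ[ℝ] Module.Dual ℝ ↥(⋀[ℝ]^p V) →ₗ[ℝ] ℝ) : ℝ :=
  LinearMap.trace ℝ ↥(⋀[ℝ]^p V)
    ((Module.evalEquiv ℝ ↥(⋀[ℝ]^p V)).symm.toLinearMap ∘ₗ C ∘ₗ B)

/-- `A_p(V)`: the subspace of symmetric bilinear forms on `⋀^p V` annihilating `Z_p(V^*)`
under the canonical perfect-duality pairing. -/
noncomputable def Ap : Submodule ℝ (↥(⋀[ℝ]^p V) →ₗ[ℝ] ↥(⋀[ℝ]^p V) →ₗ[ℝ] ℝ) where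
  carrier := {B | (∀ x y, B x y = B y x) ∧ ∀ C ∈ ZpDual p V, pairingY p V B C = 0}
  add_mem' := by
    intro B B' hB hB'
    refine ⟨fun x y => by simp [hB.1 x y, hB'.1 x y], fun C hC => ?_⟩
    have h : pairingY p V (B + B') C = pairingY p V B C + pairingY p V B' C := by
      simp [pairingY, LinearMap.comp_add, LinearMap.add_comp, map_add]
    rw [h, hB.2 C hC, hB'.2 C hC, add_zero]
  zero_mem' := by
    refine ⟨fun x y => by simp, fun C hC => ?_⟩
    simp [pairingY]
  smul_mem' := by
    intro c B hB
    refine ⟨fun x y => by simp [hB.1 x y], fun C hC => ?_⟩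
    have h : pairingY p V (c • B) C = c * pairingY p V B C := by
      simp [pairingY, LinearMap.comp_smul, LinearMap.smul_comp, map_smul]
    rw [h, hB.2 C hC, mul_zero]

variable {V}

lemma map_mem_extPower {M N : Type*} [AddCommGroup M] [Module ℝ M] [AddCommGroup N]
    [Module ℝ N] (f : M →ₗ[ℝ] N) {x : ExteriorAlgebra ℝ M} (hx : x ∈ ⋀[ℝ]^p M) :
    ExteriorAlgebra.map f x ∈ ⋀[ℝ]^p N := by
  have h : Submodule.map (ExteriorAlgebra.map f).toLinearMap (⋀[ℝ]^p M) ≤ ⋀[ℝ]^p N := by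
    rw [Submodule.map_pow]
    refine pow_le_pow_left' ?_ p
    rw [ExteriorAlgebra.ι_range_map_map]
    rintro y ⟨z, -, rfl⟩
    exact LinearMap.mem_range_self _ _
  exact h ⟨x, hx, rfl⟩

/-- The map induced on `p`-th exterior powers by a linear map. -/
noncomputable def extPowMap {M N : Type*} [AddCommGroup M] [Module ℝ M] [AddCommGroup N]
    [Module ℝ N] (f : M →ₗ[ℝ] N) : ↥(⋀[ℝ]^p M) →ₗ[ℝ] ↥(⋀[ℝ]^p N) :=
  ((ExteriorAlgebra.map f).toLinearMap.comp (⋀[ℝ]^p M).subtype).codRestrict _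
    (fun x => map_mem_extPower p f x.2)

/-- Pullback (restriction) of bilinear forms along a linear map, as a linear map. -/
noncomputable def restrictBilin {W W' : Type*} [AddCommGroup W] [Module ℝ W]
    [AddCommGroup W'] [Module ℝ W'] (e : W' →ₗ[ℝ] W) :
    (W →ₗ[ℝ] W →ₗ[ℝ] ℝ) →ₗ[ℝ] (W' →ₗ[ℝ] W' →ₗ[ℝ] ℝ) where
  toFun B := B.compl₁₂ e e
  map_add' B C := by ext x y; simp [LinearMap.compl₁₂_apply]
  map_smul' c B := by ext x y; simp [LinearMap.compl₁₂_apply]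


section Aux

variable {p : ℕ}

lemma extPowMap_wedge {M N : Type*} [AddCommGroup M] [Module ℝ M] [AddCommGroup N]
    [Module ℝ N] (f : M →ₗ[ℝ] N) (v : Fin p → M) :
    extPowMap p f (wedge p M v) = wedge p N (f ∘ v) := by
  apply Subtype.ext
  show ExteriorAlgebra.map f (ExteriorAlgebra.ιMulti ℝ p v) = ExteriorAlgebra.ιMulti ℝ p (f ∘ v)
  exact ExteriorAlgebra.map_apply_ιMulti f v

lemma span_wedge (V : Type*) [AddCommGroup V] [Module ℝ V] :
    Submodule.span ℝ (Set.range (wedge p V)) = ⊤ := by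
  apply Submodule.map_injective_of_injective (⋀[ℝ]^p V).injective_subtype
  rw [Submodule.map_span, Submodule.map_top, Submodule.range_subtype]
  have h : (⋀[ℝ]^p V).subtype '' Set.range (wedge p V)
      = Set.range (ExteriorAlgebra.ιMulti ℝ p (M := V)) := by
    rw [← Set.range_comp]; rfl
  rw [h, ExteriorAlgebra.ιMulti_span_fixedDegree]

lemma ext_wedge {V : Type*} [AddCommGroup V] [Module ℝ V] {N : Type*} [AddCommGroup N]
    [Module ℝ N] {L1 L2 : ↥(⋀[ℝ]^p V) →ₗ[ℝ] N}
    (h : ∀ v : Fin p → V, L1 (wedge p V v) = L2 (wedge p V v)) : L1 = L2 :=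
  LinearMap.ext_on_range (span_wedge V) h

lemma dualWedge_comp {M N : Type*} [AddCommGroup M] [Module ℝ M] [AddCommGroup N]
    [Module ℝ N] (f : M →ₗ[ℝ] N) (g : Fin p → Module.Dual ℝ N) :
    (dualWedge p N g).comp (extPowMap p f) = dualWedge p M (fun i => (g i).comp f) := by
  apply ext_wedge
  intro v
  rw [LinearMap.comp_apply, extPowMap_wedge]
  show ExteriorAlgebra.liftAlternating (Pi.single p _) (ExteriorAlgebra.ιMulti ℝ p (f ∘ v))
      = ExteriorAlgebra.liftAlternating (Pi.single p _) (ExteriorAlgebra.ιMulti ℝ p v)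
  rw [ExteriorAlgebra.liftAlternating_apply_ιMulti, ExteriorAlgebra.liftAlternating_apply_ιMulti,
    Pi.single_eq_same, Pi.single_eq_same]
  rfl

lemma restrictBilin_apply {W W' : Type*} [AddCommGroup W] [Module ℝ W]
    [AddCommGroup W'] [Module ℝ W'] (e : W' →ₗ[ℝ] W) (B : W →ₗ[ℝ] W →ₗ[ℝ] ℝ) (x y : W') :
    restrictBilin e B x y = B (e x) (e y) := rfl

lemma restrictBilin_eq_comp {W W' : Type*} [AddCommGroup W] [Module ℝ W]
    [AddCommGroup W'] [Module ℝ W'] (e : W' →ₗ[ℝ] W) (B : W →ₗ[ℝ] W →ₗ[ℝ] ℝ) :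
    (restrictBilin e B : W' →ₗ[ℝ] Module.Dual ℝ W') = e.dualMap ∘ₗ B ∘ₗ e := rfl

lemma pairing_adj {M N : Type*} [AddCommGroup M] [Module ℝ M] [FiniteDimensional ℝ M]
    [AddCommGroup N] [Module ℝ N] [FiniteDimensional ℝ N]
    (e : ↥(⋀[ℝ]^p M) →ₗ[ℝ] ↥(⋀[ℝ]^p N))
    (B : ↥(⋀[ℝ]^p N) →ₗ[ℝ] ↥(⋀[ℝ]^p N) →ₗ[ℝ] ℝ)
    (C : Module.Dual ℝ ↥(⋀[ℝ]^p M) →ₗ[ℝ] Module.Dual ℝ ↥(⋀[ℝ]^p M) →ₗ[ℝ] ℝ) :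
    pairingY p M (restrictBilin e B) C = pairingY p N B (restrictBilin e.dualMap C) := by
  have key : e ∘ₗ (Module.evalEquiv ℝ ↥(⋀[ℝ]^p M)).symm.toLinearMap
      = (Module.evalEquiv ℝ ↥(⋀[ℝ]^p N)).symm.toLinearMap ∘ₗ e.dualMap.dualMap := by
    refine LinearMap.ext fun x => ?_
    have h := LinearMap.congr_fun (Module.Dual.eval_naturality e)
      ((Module.evalEquiv ℝ ↥(⋀[ℝ]^p M)).symm x)
    simp only [LinearMap.comp_apply] at h
    simp only [LinearMap.comp_apply, LinearEquiv.coe_coe]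
    apply (Module.evalEquiv ℝ ↥(⋀[ℝ]^p N)).injective
    rw [(Module.evalEquiv ℝ ↥(⋀[ℝ]^p N)).apply_symm_apply, Module.evalEquiv_apply, ← h]
    congr 1
    rw [← Module.evalEquiv_apply, (Module.evalEquiv ℝ ↥(⋀[ℝ]^p M)).apply_symm_apply]
  unfold pairingY
  rw [restrictBilin_eq_comp, restrictBilin_eq_comp]
  have h1 : (Module.evalEquiv ℝ ↥(⋀[ℝ]^p M)).symm.toLinearMap
          ∘ₗ C ∘ₗ (e.dualMap ∘ₗ B ∘ₗ e)
      = ((Module.evalEquiv ℝ ↥(⋀[ℝ]^p M)).symm.toLinearMap ∘ₗ C ∘ₗ e.dualMap ∘ₗ B) ∘ₗ e := by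
    simp only [LinearMap.comp_assoc]
  rw [h1, LinearMap.trace_comp_comm']
  have h2 : e ∘ₗ ((Module.evalEquiv ℝ ↥(⋀[ℝ]^p M)).symm.toLinearMap ∘ₗ C ∘ₗ e.dualMap ∘ₗ B)
      = (Module.evalEquiv ℝ ↥(⋀[ℝ]^p N)).symm.toLinearMap
          ∘ₗ (e.dualMap.dualMap ∘ₗ C ∘ₗ e.dualMap) ∘ₗ B := by
    simp only [← LinearMap.comp_assoc, key]
  rw [h2]

lemma mem_Zp_iff {V : Type*} [AddCommGroup V] [Module ℝ V]
    (B : ↥(⋀[ℝ]^p V) →ₗ[ℝ] ↥(⋀[ℝ]^p V) →ₗ[ℝ] ℝ) :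
    B ∈ Zp p V ↔ (∀ x y, B x y = B y x) ∧
      ∀ v : Fin p → V, B (wedge p V v) (wedge p V v) = 0 := Iff.rfl

lemma mem_ZpDual_iff {V : Type*} [AddCommGroup V] [Module ℝ V]
    (C : Module.Dual ℝ ↥(⋀[ℝ]^p V) →ₗ[ℝ] Module.Dual ℝ ↥(⋀[ℝ]^p V) →ₗ[ℝ] ℝ) :
    C ∈ ZpDual p V ↔ (∀ x y, C x y = C y x) ∧
      ∀ f : Fin p → Module.Dual ℝ V, C (dualWedge p V f) (dualWedge p V f) = 0 := Iff.rfl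

lemma mem_Ap_iff {V : Type*} [AddCommGroup V] [Module ℝ V] [FiniteDimensional ℝ V]
    (B : ↥(⋀[ℝ]^p V) →ₗ[ℝ] ↥(⋀[ℝ]^p V) →ₗ[ℝ] ℝ) :
    B ∈ Ap p V ↔ (∀ x y, B x y = B y x) ∧
      ∀ C ∈ ZpDual p V, pairingY p V B C = 0 := Iff.rfl

end Aux

set_option maxHeartbeats 1600000 in
/-- let `H` be a hyperplane of a finite-dimensional real vector space `V` and
`1 ≤ k ≤ dim H`.  Then the restriction map `res_H : Y_k(V) → Y_k(H)` (pullback of symmetric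
bilinear forms along the map `⋀^k H → ⋀^k V` induced by the inclusion) satisfies
`res_H (Z_k(V)) = Z_k(H)` and `res_H (A_k(V)) = A_k(H)`. -/
theorem restrict_Zp_Ap_to_hyperplane (V : Type*) [AddCommGroup V] [Module ℝ V]
    [FiniteDimensional ℝ V] (H : Submodule ℝ V)
    (hH : Module.finrank ℝ ↥H + 1 = Module.finrank ℝ V)
    (k : ℕ) (hk1 : 1 ≤ k) (hk2 : k ≤ Module.finrank ℝ ↥H) :
    Submodule.map (restrictBilin (extPowMap k H.subtype)) (Zp k V) = Zp k ↥H ∧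
      Submodule.map (restrictBilin (extPowMap k H.subtype)) (Ap k V) = Ap k ↥H := by
  classical
  obtain ⟨K, hK⟩ := Submodule.exists_isCompl H
  set π : V →ₗ[ℝ] ↥H := Submodule.linearProjOfIsCompl H K hK with hπ
  have hπι : ∀ x : ↥H, π (H.subtype x) = x := fun x =>
    Submodule.linearProjOfIsCompl_apply_left hK x
  have hPE : (extPowMap k π) ∘ₗ (extPowMap k H.subtype) = LinearMap.id := by
    apply ext_wedge
    intro v
    rw [LinearMap.comp_apply, extPowMap_wedge, extPowMap_wedge, LinearMap.id_apply]
    congr 1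
    funext i
    exact hπι (v i)
  have hres : ∀ B : ↥(⋀[ℝ]^k ↥H) →ₗ[ℝ] ↥(⋀[ℝ]^k ↥H) →ₗ[ℝ] ℝ,
      restrictBilin (extPowMap k H.subtype) (restrictBilin (extPowMap k π) B) = B := by
    intro B
    refine LinearMap.ext fun x => LinearMap.ext fun y => ?_
    rw [restrictBilin_apply, restrictBilin_apply]
    rw [show extPowMap k π (extPowMap k H.subtype x) = x from LinearMap.congr_fun hPE x,
      show extPowMap k π (extPowMap k H.subtype y) = y from LinearMap.congr_fun hPE y]
  have hdW_ι : ∀ f : Fin k → Module.Dual ℝ V,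
      (extPowMap k H.subtype).dualMap (dualWedge k V f)
        = dualWedge k ↥H (fun i => (f i).comp H.subtype) := fun f => by
    rw [LinearMap.dualMap_apply']
    exact dualWedge_comp H.subtype f
  have hdW_π : ∀ g : Fin k → Module.Dual ℝ ↥H,
      (extPowMap k π).dualMap (dualWedge k ↥H g)
        = dualWedge k V (fun i => (g i).comp π) := fun g => by
    rw [LinearMap.dualMap_apply']
    exact dualWedge_comp π g
  constructor
  · apply le_antisymm
    · rintro _ ⟨B, hB, rfl⟩
      replace hB := (mem_Zp_iff (p := k) B).mp hB
      refine (mem_Zp_iff _).mpr ⟨fun x y => ?_, fun v => ?_⟩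
      · rw [restrictBilin_apply, restrictBilin_apply, hB.1]
      · rw [restrictBilin_apply, extPowMap_wedge]
        exact hB.2 _
    · intro B hB
      replace hB := (mem_Zp_iff (p := k) B).mp hB
      refine ⟨restrictBilin (extPowMap k π) B, (mem_Zp_iff _).mpr ⟨fun x y => ?_, fun v => ?_⟩, hres B⟩
      · rw [restrictBilin_apply, restrictBilin_apply, hB.1]
      · rw [restrictBilin_apply, extPowMap_wedge]
        exact hB.2 _
  · apply le_antisymm
    · rintro _ ⟨B, hB, rfl⟩
      replace hB := (mem_Ap_iff (p := k) B).mp hB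
      refine (mem_Ap_iff _).mpr ⟨fun x y => ?_, fun C hC => ?_⟩
      · rw [restrictBilin_apply, restrictBilin_apply, hB.1]
      · replace hC := (mem_ZpDual_iff (p := k) C).mp hC
        rw [pairing_adj]
        apply hB.2
        refine (mem_ZpDual_iff _).mpr ⟨fun x y => ?_, fun f => ?_⟩
        · rw [restrictBilin_apply, restrictBilin_apply, hC.1]
        · rw [restrictBilin_apply, hdW_ι f]
          exact hC.2 _
    · intro B hB
      replace hB := (mem_Ap_iff (p := k) B).mp hB
      refine ⟨restrictBilin (extPowMap k π) B, (mem_Ap_iff _).mpr ⟨fun x y => ?_, fun C hC => ?_⟩, hres B⟩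
      · rw [restrictBilin_apply, restrictBilin_apply, hB.1]
      · replace hC := (mem_ZpDual_iff (p := k) C).mp hC
        rw [pairing_adj]
        apply hB.2
        refine (mem_ZpDual_iff _).mpr ⟨fun x y => ?_, fun g => ?_⟩
        · rw [restrictBilin_apply, restrictBilin_apply, hC.1]
        · rw [restrictBilin_apply, hdW_π g]
          exact hC.2 _
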